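/- arXiv:1510.03742 — 5 statements merged into one kernel-verified Lean document; each statement's English description precedes it below -/
import Mathlib

section
/- If E and E' are two distinct edge sets on Fin n, then the inner product of the corresponding graph states satisfies |⟨G_E, G_{E'}⟩| ≤ 1/√2; equivalently, |∑_{S : Fin n → Bool} (−1)^{e_E(S) + e_{E'}(S)}| ≤ 2^n / √2. In particular, graph states of distinct graphs are never equal. -/
open Finset

/-- An `n`-qubit state: a vector of amplitudes indexed by bit strings `S : Fin n → Bool`. -/
abbrev QState (n : ℕ) := (Fin n → Bool) → ℂ

open scoped Classical in
/-- `edgeCount E S` is the number of edges of `E` all of whose endpoints `v` satisfy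
`S v = true` (a self-loop `s(v,v)` counts when `S v = true`). -/
noncomputable def edgeCount {n : ℕ} (E : Finset (Sym2 (Fin n))) (S : Fin n → Bool) : ℕ :=
  (E.filter fun e => ∀ v ∈ e, S v = true).card

/-- The graph state `|G_E⟩` of the (multi)graph on `Fin n` with edge set `E`:
its amplitude at `S` is `(-1) ^ (edgeCount E S) * 2 ^ (-n/2)`. -/
noncomputable def graphState {n : ℕ} (E : Finset (Sym2 (Fin n))) : QState n :=
  fun S => (-1 : ℂ) ^ edgeCount E S * (((Real.sqrt 2)⁻¹ ^ n : ℝ) : ℂ)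

/-- Pauli `Z` on qubit `a`:  `(Z_a ψ) S = (-1) ^ (S a) * ψ S`. -/
noncomputable def Zgate {n : ℕ} (a : Fin n) : QState n → QState n :=
  fun ψ S => (if S a then -1 else 1) * ψ S

/-- Pauli `X` on qubit `a`:  `(X_a ψ) S = ψ S'` where `S'` is `S` with bit `a` flipped. -/
noncomputable def Xgate {n : ℕ} (a : Fin n) : QState n → QState n :=
  fun ψ S => ψ (Function.update S a (!S a))

/-- Controlled-`Z` on qubits `a`, `b`:  `(CZ_{a,b} ψ) S = (-1) ^ (S a * S b) * ψ S`. -/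
noncomputable def CZgate {n : ℕ} (a b : Fin n) : QState n → QState n :=
  fun ψ S => (if S a && S b then -1 else 1) * ψ S

/-- Hadamard gate on qubit `a`. -/
noncomputable def Hgate {n : ℕ} (a : Fin n) : QState n → QState n :=
  fun ψ S => ((Real.sqrt 2 : ℝ) : ℂ)⁻¹ *
    ∑ t : Bool, (if S a && t then -1 else 1) * ψ (Function.update S a t)

/-- The neighbourhood `N(v)` of `v` in the graph with edge set `E`. -/
noncomputable def nbhd {n : ℕ} (E : Finset (Sym2 (Fin n))) (v : Fin n) : Finset (Fin n) :=
  Finset.univ.filter fun u => s(u, v) ∈ E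

/-- The inner product `⟨φ, ψ⟩ = ∑ S, conj (φ S) * ψ S`. -/
noncomputable def qInner {n : ℕ} (φ ψ : QState n) : ℂ :=
  ∑ S : Fin n → Bool, (starRingEnd ℂ) (φ S) * ψ S

/-! Since `e_E + e_E' ≡ e_D (mod 2)` for `D = E ∆ E'`, everything reduces to bounding
`∑_S (-1)^(e_D S)` for a nonempty graph `D`. If `D` has an edge `uv` with `u ≠ v`, the edge
counts of `S`, `S ⊕ u`, `S ⊕ v`, `S ⊕ u ⊕ v` have odd sum (every other edge is counted an even
number of times), so these four signs add up to `±2` and the sum is at most `2^n / 2`. If `D`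
has only loops, flipping a looped vertex changes `e_D` by exactly one and the sum vanishes. -/

section FlipBit

variable {V : Type*} [DecidableEq V]

def flipBit (a : V) (S : V → Bool) : V → Bool :=
  Function.update S a (!S a)

@[simp]
lemma flipBit_apply_self (a : V) (S : V → Bool) : flipBit a S a = !S a := by
  simp [flipBit]

lemma flipBit_apply_of_ne {a w : V} (h : w ≠ a) (S : V → Bool) : flipBit a S w = S w := by
  simp [flipBit, h]

lemma flipBit_involutive (a : V) : Function.Involutive (flipBit a) := by
  intro S
  funext w
  by_cases h : w = a
  · subst h; simp
  · simp [flipBit_apply_of_ne h]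

lemma flipBit_comm (a b : V) (S : V → Bool) :
    flipBit a (flipBit b S) = flipBit b (flipBit a S) := by
  funext w
  by_cases ha : w = a <;> by_cases hb : w = b
  · subst ha hb; rfl
  all_goals simp_all [flipBit_apply_of_ne]

lemma flipBit_ne_self (a : V) (S : V → Bool) : flipBit a S ≠ S :=
  fun h => by simpa using congrFun h a

end FlipBit

section EdgeIndicator

variable {V : Type*}

open scoped Classical in
noncomputable def edgeIndicator (S : V → Bool) (e : Sym2 V) : ZMod 2 :=
  if ∀ v ∈ e, S v = true then 1 else 0

lemma edgeIndicator_mk (S : V → Bool) (a b : V) :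
    edgeIndicator S s(a, b) = if S a = true ∧ S b = true then 1 else 0 := by
  simp [edgeIndicator]

variable [DecidableEq V]

lemma edgeIndicator_flipBit_of_notMem {a : V} {e : Sym2 V} (h : a ∉ e) (S : V → Bool) :
    edgeIndicator (flipBit a S) e = edgeIndicator S e := by
  have hS : ∀ v ∈ e, flipBit a S v = S v :=
    fun v hv => flipBit_apply_of_ne (by rintro rfl; exact h hv) S
  simp only [edgeIndicator]
  congr 1
  exact propext (forall₂_congr fun v hv => by rw [hS v hv])

lemma edgeIndicator_add_edgeIndicator_flipBit_of_isDiag (v : V) (S : V → Bool) {e : Sym2 V}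
    (he : e.IsDiag) :
    edgeIndicator S e + edgeIndicator (flipBit v S) e = if e = s(v, v) then 1 else 0 := by
  by_cases hv : v ∈ e
  · induction e using Sym2.ind with | _ a b => ?_
    obtain rfl := Sym2.mk_isDiag_iff.1 he
    obtain rfl : v = a := by simpa using hv
    simp only [edgeIndicator_mk, if_true, flipBit_apply_self]
    cases S v <;> decide
  · have hne : e ≠ s(v, v) := fun h => hv (h ▸ Sym2.mem_mk_left v v)
    rw [edgeIndicator_flipBit_of_notMem hv, if_neg hne, CharTwo.add_self_eq_zero]

lemma edgeIndicator_secondDiff {u v : V} (huv : u ≠ v) (S : V → Bool) (e : Sym2 V) :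
    edgeIndicator S e + edgeIndicator (flipBit u S) e + edgeIndicator (flipBit v S) e +
      edgeIndicator (flipBit u (flipBit v S)) e = if e = s(u, v) then 1 else 0 := by
  by_cases hu : u ∈ e
  · by_cases hv : v ∈ e
    · obtain rfl := (Sym2.mem_and_mem_iff huv).1 ⟨hu, hv⟩
      simp only [edgeIndicator_mk, if_true, flipBit_apply_self, flipBit_apply_of_ne huv,
        flipBit_apply_of_ne huv.symm]
      cases S u <;> cases S v <;> decide
    · have hne : e ≠ s(u, v) := fun h => hv (h ▸ Sym2.mem_mk_right u v)
      rw [flipBit_comm, edgeIndicator_flipBit_of_notMem hv, edgeIndicator_flipBit_of_notMem hv,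
        if_neg hne]
      grind
  · have hne : e ≠ s(u, v) := fun h => hu (h ▸ Sym2.mem_mk_left u v)
    rw [edgeIndicator_flipBit_of_notMem hu, edgeIndicator_flipBit_of_notMem hu, if_neg hne]
    grind

end EdgeIndicator

open scoped symmDiff

section EdgeCount

variable {n : ℕ}

lemma edgeCount_cast_eq_sum (D : Finset (Sym2 (Fin n))) (S : Fin n → Bool) :
    (edgeCount D S : ZMod 2) = ∑ e ∈ D, edgeIndicator S e := by
  rw [edgeCount, card_filter, Nat.cast_sum]
  refine sum_congr rfl fun e _ => ?_
  simp [edgeIndicator]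

lemma odd_edgeCount_secondDiff (D : Finset (Sym2 (Fin n))) {u v : Fin n} (huv : u ≠ v)
    (h : s(u, v) ∈ D) (S : Fin n → Bool) :
    Odd (edgeCount D S + edgeCount D (flipBit u S) + edgeCount D (flipBit v S) +
      edgeCount D (flipBit u (flipBit v S))) := by
  rw [← ZMod.natCast_eq_one_iff_odd]
  push_cast
  simp only [edgeCount_cast_eq_sum, ← sum_add_distrib, edgeIndicator_secondDiff huv,
    sum_ite_eq', if_pos h]

lemma odd_edgeCount_add_edgeCount_flipBit (D : Finset (Sym2 (Fin n)))
    (hD : ∀ e ∈ D, e.IsDiag) {v : Fin n} (h : s(v, v) ∈ D) (S : Fin n → Bool) :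
    Odd (edgeCount D S + edgeCount D (flipBit v S)) := by
  rw [← ZMod.natCast_eq_one_iff_odd]
  push_cast
  rw [edgeCount_cast_eq_sum, edgeCount_cast_eq_sum, ← sum_add_distrib,
    sum_congr rfl fun e he => edgeIndicator_add_edgeIndicator_flipBit_of_isDiag v S (hD e he),
    sum_ite_eq', if_pos h]

lemma sum_add_sum_eq_sum_symmDiff_add_two_nsmul {ι M : Type*} [AddCommMonoid M] [DecidableEq ι]
    (s t : Finset ι) (f : ι → M) :
    ∑ i ∈ s, f i + ∑ i ∈ t, f i = ∑ i ∈ s ∆ t, f i + 2 • ∑ i ∈ s ∩ t, f i := by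
  rw [symmDiff_def, sup_eq_union, sum_union disjoint_sdiff_sdiff,
    ← sum_inter_add_sum_sdiff s t f, ← sum_inter_add_sum_sdiff t s f,
    inter_comm t s, two_nsmul]
  abel

lemma edgeCount_add_edgeCount (E E' : Finset (Sym2 (Fin n))) (S : Fin n → Bool) :
    edgeCount E S + edgeCount E' S = edgeCount (E ∆ E') S + 2 * edgeCount (E ∩ E') S := by
  simp only [edgeCount, card_filter]
  rw [sum_add_sum_eq_sum_symmDiff_add_two_nsmul, smul_eq_mul]

end EdgeCount

lemma four_mul_norm_sum_le {α E : Type*} [Fintype α] [NormedAddCommGroup E] [NormedSpace ℝ E]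
    {σ τ : α → α} (hσ : σ.Bijective) (hτ : τ.Bijective) (f : α → E) {c : ℝ}
    (hc : ∀ x, ‖f x + f (σ x) + f (τ x) + f (σ (τ x))‖ ≤ c) :
    4 * ‖∑ x, f x‖ ≤ Fintype.card α * c := by
  have hsum : ∑ x, (f x + f (σ x) + f (τ x) + f (σ (τ x))) = 4 • ∑ x, f x := by
    simp only [sum_add_distrib, hσ.sum_comp f, hτ.sum_comp f,
      hτ.sum_comp fun y => f (σ y)]
    abel
  calc 4 * ‖∑ x, f x‖ = ‖∑ x, (f x + f (σ x) + f (τ x) + f (σ (τ x)))‖ := by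
        rw [hsum, RCLike.norm_nsmul ℝ, nsmul_eq_mul, Nat.cast_ofNat]
    _ ≤ ∑ x, ‖f x + f (σ x) + f (τ x) + f (σ (τ x))‖ := norm_sum_le _ _
    _ ≤ ∑ _x : α, c := sum_le_sum fun x _ => hc x
    _ = Fintype.card α * c := by simp

lemma norm_neg_one_pow_add_add_add_of_odd {a b c d : ℕ} (h : Odd (a + b + c + d)) :
    ‖(-1 : ℂ) ^ a + (-1) ^ b + (-1) ^ c + (-1) ^ d‖ = 2 := by
  have hprod : (-1 : ℂ) ^ a * (-1) ^ b * (-1) ^ c * (-1) ^ d = -1 := by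
    rw [← pow_add, ← pow_add, ← pow_add, h.neg_one_pow]
  rcases neg_one_pow_eq_or ℂ a with ha | ha <;> rcases neg_one_pow_eq_or ℂ b with hb | hb <;>
    rcases neg_one_pow_eq_or ℂ c with hc | hc <;> rcases neg_one_pow_eq_or ℂ d with hd | hd <;>
    simp only [ha, hb, hc, hd] at hprod ⊢ <;> norm_num at hprod <;> norm_num

lemma neg_one_pow_add_neg_one_pow_of_odd {a b : ℕ} (h : Odd (a + b)) :
    (-1 : ℂ) ^ a + (-1) ^ b = 0 := by
  have hab : (-1 : ℂ) ^ a * (-1) ^ b = -1 := by rw [← pow_add, h.neg_one_pow]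
  rcases neg_one_pow_eq_or ℂ a with ha | ha <;> rcases neg_one_pow_eq_or ℂ b with hb | hb <;>
    simp only [ha, hb] at hab ⊢ <;> norm_num at hab <;> norm_num

section SignSum

variable {n : ℕ}

lemma sum_neg_one_pow_edgeCount_eq_zero_of_isDiag (D : Finset (Sym2 (Fin n)))
    (hD : ∀ e ∈ D, e.IsDiag) {v : Fin n} (hv : s(v, v) ∈ D) :
    ∑ S : Fin n → Bool, (-1 : ℂ) ^ edgeCount D S = 0 :=
  sum_ninvolution (flipBit v)
    (fun S => neg_one_pow_add_neg_one_pow_of_odd (odd_edgeCount_add_edgeCount_flipBit D hD hv S))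
    (fun S _ => flipBit_ne_self v S) (fun _ => mem_univ _) (flipBit_involutive v)

lemma norm_sum_neg_one_pow_edgeCount_le_of_mem (D : Finset (Sym2 (Fin n))) {u v : Fin n}
    (huv : u ≠ v) (h : s(u, v) ∈ D) :
    ‖∑ S : Fin n → Bool, (-1 : ℂ) ^ edgeCount D S‖ ≤ 2 ^ n / 2 := by
  have := four_mul_norm_sum_le (flipBit_involutive u).bijective (flipBit_involutive v).bijective
    (fun S => (-1 : ℂ) ^ edgeCount D S)
    (fun S => (norm_neg_one_pow_add_add_add_of_odd (odd_edgeCount_secondDiff D huv h S)).le)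
  simp only [Fintype.card_fun, Fintype.card_bool, Fintype.card_fin, Nat.cast_pow,
    Nat.cast_ofNat] at this
  linarith

lemma norm_sum_neg_one_pow_edgeCount_le (D : Finset (Sym2 (Fin n))) (hD : D.Nonempty) :
    ‖∑ S : Fin n → Bool, (-1 : ℂ) ^ edgeCount D S‖ ≤ 2 ^ n / 2 := by
  by_cases hdiag : ∀ e ∈ D, e.IsDiag
  · obtain ⟨e, he⟩ := hD
    induction e using Sym2.ind with | _ v w => ?_
    obtain rfl := Sym2.mk_isDiag_iff.1 (hdiag _ he)
    rw [sum_neg_one_pow_edgeCount_eq_zero_of_isDiag D hdiag he, norm_zero]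
    positivity
  · push Not at hdiag
    obtain ⟨e, he, hnd⟩ := hdiag
    induction e using Sym2.ind with | _ u v => ?_
    exact norm_sum_neg_one_pow_edgeCount_le_of_mem D (fun h => hnd (Sym2.mk_isDiag_iff.2 h)) he

end SignSum

lemma neg_one_pow_edgeCount_add_edgeCount {n : ℕ} (E E' : Finset (Sym2 (Fin n)))
    (S : Fin n → Bool) :
    (-1 : ℂ) ^ (edgeCount E S + edgeCount E' S) = (-1) ^ edgeCount (E ∆ E') S := by
  rw [edgeCount_add_edgeCount, pow_add, pow_mul, neg_one_sq, one_pow, mul_one]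

lemma qInner_graphState {n : ℕ} (E E' : Finset (Sym2 (Fin n))) :
    qInner (graphState E) (graphState E') =
      ((2 : ℂ) ^ n)⁻¹ * ∑ S : Fin n → Bool, (-1 : ℂ) ^ (edgeCount E S + edgeCount E' S) := by
  have hnorm : (((Real.sqrt 2)⁻¹ ^ n : ℝ) : ℂ) * (((Real.sqrt 2)⁻¹ ^ n : ℝ) : ℂ) =
      ((2 : ℂ) ^ n)⁻¹ := by
    rw [← Complex.ofReal_mul, ← mul_pow, ← mul_inv, Real.mul_self_sqrt zero_le_two]
    push_cast
    rw [inv_pow]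
  rw [qInner, mul_sum]
  refine sum_congr rfl fun S _ => ?_
  simp only [graphState, map_mul, map_pow, map_neg, map_one, Complex.conj_ofReal]
  rw [pow_add, ← hnorm]
  ring

lemma qInner_graphState_self {n : ℕ} (E : Finset (Sym2 (Fin n))) :
    qInner (graphState E) (graphState E) = 1 := by
  simp [qInner_graphState, ← two_mul, pow_mul]

/-- Distinct graphs have graph states with overlap at most `1/√2`; in particular the
graph states of distinct graphs are distinct. -/
theorem stmt5 {n : ℕ} (E E' : Finset (Sym2 (Fin n))) (hne : E ≠ E') :
    ‖qInner (graphState E) (graphState E')‖ ≤ (Real.sqrt 2)⁻¹ ∧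
    ‖∑ S : Fin n → Bool, (-1 : ℂ) ^ (edgeCount E S + edgeCount E' S)‖ ≤
      2 ^ n / Real.sqrt 2 ∧
    graphState E ≠ graphState E' := by
  have hsqrt : Real.sqrt 2 ≤ 2 := Real.sqrt_le_iff.2 ⟨zero_le_two, by norm_num⟩
  have hsum : ‖∑ S : Fin n → Bool, (-1 : ℂ) ^ (edgeCount E S + edgeCount E' S)‖ ≤
      2 ^ n / Real.sqrt 2 := by
    simp only [neg_one_pow_edgeCount_add_edgeCount]
    exact (norm_sum_neg_one_pow_edgeCount_le _ (symmDiff_nonempty.2 hne)).trans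
      (div_le_div_of_nonneg_left (by positivity) (by positivity) hsqrt)
  have hinner : ‖qInner (graphState E) (graphState E')‖ ≤ (Real.sqrt 2)⁻¹ := by
    rw [qInner_graphState, norm_mul, norm_inv, norm_pow, Complex.norm_two]
    calc ((2 : ℝ) ^ n)⁻¹ * ‖∑ S : Fin n → Bool, (-1 : ℂ) ^ (edgeCount E S + edgeCount E' S)‖
        ≤ ((2 : ℝ) ^ n)⁻¹ * (2 ^ n / Real.sqrt 2) := by gcongr
      _ = (Real.sqrt 2)⁻¹ := by field_simp
  refine ⟨hinner, hsum, fun h => ?_⟩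
  rw [h, qInner_graphState_self, norm_one] at hinner
  exact (inv_lt_one_of_one_lt₀ Real.one_lt_sqrt_two).not_ge hinner
end

section
/- For every edge set E on Fin n and every vertex a, applying the Pauli Z gate on qubit a performs loop-complementation at a: Z_a |G_E⟩ = |G_{E'}⟩, where E' is the symmetric difference of E with the single self-loop {s(a,a)}. -/
open Finset

/-!
Only the parity of `edgeCount` matters, and `S ↦ (-1) ^ #s` turns symmetric difference into
multiplication since `#(s ∆ t) ≡ #s + #t (mod 2)`. Filtering commutes with `∆`, so the sign of
`graphState (E ∆ {s(a, a)})` at `S` is that of `graphState E` times the sign contributed by the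
loop alone, which is `-1` exactly when `S a = true`: the sign of `Z_a`.
-/

open scoped symmDiff

namespace Finset

variable {α : Type*} [DecidableEq α]

theorem filter_symmDiff (p : α → Prop) [DecidablePred p] (s t : Finset α) :
    (s ∆ t).filter p = s.filter p ∆ t.filter p := by
  ext x
  simp only [mem_filter, mem_symmDiff]
  tauto

theorem card_symmDiff_add_two_mul_card_inter (s t : Finset α) :
    #(s ∆ t) + 2 * #(s ∩ t) = #s + #t := by
  have hsub : s ∩ t ⊆ s ∪ t := inter_subset_union
  rw [symmDiff_eq_sup_sdiff_inf, sup_eq_union, inf_eq_inter, card_sdiff_of_subset hsub,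
    ← card_union_add_card_inter s t]
  have := card_le_card hsub
  omega

theorem neg_one_pow_card_symmDiff {R : Type*} [Monoid R] [HasDistribNeg R] (s t : Finset α) :
    (-1 : R) ^ #(s ∆ t) = (-1) ^ #s * (-1) ^ #t := by
  rw [← pow_add, ← card_symmDiff_add_two_mul_card_inter, pow_add, pow_mul, neg_one_sq, one_pow,
    mul_one]

end Finset

section GraphState

variable {n : ℕ}

theorem neg_one_pow_edgeCount_symmDiff (E F : Finset (Sym2 (Fin n))) (S : Fin n → Bool) :
    (-1 : ℂ) ^ edgeCount (E ∆ F) S = (-1) ^ edgeCount E S * (-1) ^ edgeCount F S := by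
  simp only [edgeCount, filter_symmDiff, neg_one_pow_card_symmDiff]

theorem edgeCount_loop (a : Fin n) (S : Fin n → Bool) :
    edgeCount {s(a, a)} S = if S a then 1 else 0 := by
  by_cases h : S a <;> simp [edgeCount, filter_singleton, h]

end GraphState

/-- Pauli `Z` on qubit `a` performs loop-complementation at `a`. -/
theorem stmt7 {n : ℕ} (E : Finset (Sym2 (Fin n))) (a : Fin n) :
    Zgate a (graphState E) = graphState (symmDiff E {s(a, a)}) := by
  funext S
  simp only [Zgate, graphState, neg_one_pow_edgeCount_symmDiff, edgeCount_loop]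
  split <;> ring
end

section
/- For every edge set E on Fin n and every vertex a, applying the Pauli X gate on qubit a performs loop-complementation on the neighbourhood of a: X_a |G_E⟩ = (−1)^{[s(a,a) ∈ E]} · |G_{E'}⟩, where E' is the symmetric difference of E with the set of self-loops {s(v,v) : v ∈ N(a) \ {a}}. -/
open Finset

/-!
Flipping bit `a` only changes whether edges through `a` lie inside the support of `S`: the loop
at `a` always toggles, and an edge `s(a, u)` with `u ≠ a` toggles exactly when `S u = true`. So
modulo 2 the edge count changes by `[s(a, a) ∈ E] + #{u ∈ N(a) \ {a} | S u}`, and the second term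
is the number of toggled loops inside the support of `S`, because edge counts are additive modulo 2
under symmetric difference.
-/

open scoped symmDiff

namespace Finset

variable {α : Type*} [DecidableEq α]

theorem natCast_card_symmDiff (s t : Finset α) : (#(s ∆ t) : ZMod 2) = #s + #t := by
  have h : #(s ∆ t) + 2 * #(s ∩ t) = #s + #t := by
    rw [← card_union_add_card_inter, symmDiff_eq_sup_sdiff_inf, two_mul, ← add_assoc,
      sup_eq_union, inf_eq_inter, card_sdiff_add_card_eq_card inter_subset_union]
  have h' := congrArg ((↑) : ℕ → ZMod 2) h
  push_cast [show (2 : ZMod 2) = 0 from rfl] at h'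
  simpa using h'

end Finset

theorem neg_one_pow_eq_of_natCast_zmod_two_eq {R : Type*} [Monoid R] [HasDistribNeg R] {m k : ℕ}
    (h : (m : ZMod 2) = k) : (-1 : R) ^ m = (-1) ^ k :=
  neg_one_pow_congr (by rw [← ZMod.natCast_eq_zero_iff_even, ← ZMod.natCast_eq_zero_iff_even, h])

section GraphState

variable {n : ℕ}

theorem filter_mem_eq_image_nbhd (E : Finset (Sym2 (Fin n))) (a : Fin n) :
    E.filter (a ∈ ·) = (nbhd E a).image (s(a, ·)) := by
  ext e
  induction e using Sym2.ind with
  | _ u v =>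
    simp only [mem_filter, mem_image, nbhd, mem_univ, true_and, Sym2.mem_iff, Sym2.eq_iff]
    constructor
    · rintro ⟨he, rfl | rfl⟩
      · exact ⟨v, by rwa [Sym2.eq_swap], by simp⟩
      · exact ⟨u, he, by simp⟩
    · rintro ⟨w, hw, ⟨rfl, rfl⟩ | ⟨rfl, rfl⟩⟩
      · exact ⟨by rwa [Sym2.eq_swap], by simp⟩
      · exact ⟨hw, by simp⟩

theorem natCast_edgeCount_symmDiff (E F : Finset (Sym2 (Fin n))) (S : Fin n → Bool) :
    (edgeCount (E ∆ F) S : ZMod 2) = edgeCount E S + edgeCount F S := by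
  simp only [edgeCount, filter_symmDiff, natCast_card_symmDiff]

theorem edgeCount_image_diag (s : Finset (Fin n)) (S : Fin n → Bool) :
    edgeCount (s.image fun v => s(v, v)) S = #(s.filter fun v => S v = true) := by
  unfold edgeCount
  rw [filter_image, card_image_of_injective (f := fun v : Fin n => s(v, v)) _ Sym2.diag_injective]
  simp

theorem natCast_edgeCount_update_not (E : Finset (Sym2 (Fin n))) (a : Fin n) (S : Fin n → Bool) :
    (edgeCount E (Function.update S a (!S a)) : ZMod 2) =
      edgeCount E S + (if s(a, a) ∈ E then 1 else 0) +
        #(((nbhd E a).erase a).filter fun v => S v = true) := by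
  set S' := Function.update S a (!S a) with hS'
  set inside : (Fin n → Bool) → Sym2 (Fin n) → ZMod 2 :=
    fun T e => if ∀ v ∈ e, T v = true then 1 else 0
  have hflip_edge (e : Sym2 (Fin n)) (he : inside S' e + inside S e ≠ 0) : a ∈ e := by
    contrapose! he
    suffices inside S' e = inside S e by rw [this, CharTwo.add_self_eq_zero]
    refine if_congr (forall₂_congr fun v hv => ?_) rfl rfl
    rw [hS', Function.update_of_ne (ne_of_mem_of_not_mem hv he)]
  have hflip_nbhd (u : Fin n) : inside S' s(a, u) + inside S s(a, u) =
      (if a = u then 1 else 0) + if u ≠ a ∧ S u = true then 1 else 0 := by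
    by_cases hu : u = a
    · subst hu
      cases h : S u <;> simp [inside, hS', h]
    · simp only [inside, Sym2.mem_iff, forall_eq_or_imp, forall_eq, hS', Function.update_self,
        Function.update_of_ne hu]
      cases S a <;> cases S u <;> simp [hu, Ne.symm hu]
  have hcast (T : Fin n → Bool) : (edgeCount E T : ZMod 2) = ∑ e ∈ E, inside T e :=
    (sum_boole ..).symm
  have hnbhd : a ∈ nbhd E a ↔ s(a, a) ∈ E := by simp [nbhd]
  calc (edgeCount E S' : ZMod 2)
      = edgeCount E S + ∑ e ∈ E, (inside S' e + inside S e) := by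
        rw [sum_add_distrib, hcast, hcast, add_left_comm, CharTwo.add_self_eq_zero, add_zero]
    _ = edgeCount E S + ∑ u ∈ nbhd E a, (inside S' s(a, u) + inside S s(a, u)) := by
        rw [← sum_filter_of_ne fun e _ => hflip_edge e, filter_mem_eq_image_nbhd,
          sum_image fun _ _ _ _ => Sym2.congr_right.mp]
    _ = _ := by
        simp only [hflip_nbhd, sum_add_distrib, sum_ite_eq, hnbhd, sum_boole]
        rw [← filter_filter, filter_ne', add_assoc]

end GraphState

/-- Pauli `X` on qubit `a` performs loop-complementation on `N(a) \ {a}`, up to the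
sign `(-1)^{[s(a,a) ∈ E]}`. -/
theorem stmt8 {n : ℕ} (E : Finset (Sym2 (Fin n))) (a : Fin n) :
    Xgate a (graphState E) = fun S =>
      (if s(a, a) ∈ E then (-1 : ℂ) else 1) *
        graphState (symmDiff E (((nbhd E a).erase a).image fun v => s(v, v))) S := by
  funext S
  have hparity : (edgeCount E (Function.update S a (!S a)) : ZMod 2) =
      ((if s(a, a) ∈ E then 1 else 0) +
        edgeCount (E ∆ ((nbhd E a).erase a).image fun v => s(v, v)) S : ℕ) := by
    push_cast
    rw [natCast_edgeCount_update_not, natCast_edgeCount_symmDiff, edgeCount_image_diag]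
    ring
  simp only [Xgate, graphState]
  rw [neg_one_pow_eq_of_natCast_zmod_two_eq hparity, pow_add, mul_assoc]
  split_ifs <;> simp
end

section
/- For every edge set E on Fin n and distinct vertices a ≠ b, the CNOT gate controlled on a and targeted on b satisfies CNOT_{a,b} |G_E⟩ = |G_{E'}⟩, where E' is obtained from E by taking the symmetric difference with the edges {s(a,v) : v ∈ N(b) \ {b}} and additionally, when b has a self-loop (s(b,b) ∈ E), with the self-loop {s(a,a)}; i.e., CNOT complements the edges between a and the neighbourhood of b (other than b itself), and loop-complements a when b carries a self-loop. -/
open Finset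

/-- `CNOT` controlled on `a` targeted on `b`:
`(CNOT_{a,b} ψ) S = ψ S'` where `S'` is `S` with bit `b` replaced by `S b XOR S a`. -/
noncomputable def CNOTgate {n : ℕ} (a b : Fin n) : QState n → QState n :=
  fun ψ S => ψ (Function.update S b (xor (S b) (S a)))

/-
The amplitude sign of `|G_E⟩` at `S` is the product over `e ∈ E` of the edge signs
`χ_S(e) = -1` if both ends of `e` lie in `S` and `1` otherwise. Since `χ_S(e)² = 1`, taking the
symmetric difference of edge sets multiplies these products. `CNOT_{a,b}` replaces `S b` by
`S b ⊕ S a`, which only changes the signs of edges at `b`: `χ(s(u,b))` picks up the factor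
`χ_S(s(a,u))` for `u ≠ b`, and the loop `χ(s(b,b))` picks up `χ_S(s(a,a))`.
-/

namespace Finset

theorem prod_symmDiff_of_mul_self_eq_one {α M : Type*} [DecidableEq α] [CommMonoid M]
    (s t : Finset α) {f : α → M} (hf : ∀ x, f x * f x = 1) :
    ∏ x ∈ symmDiff s t, f x = (∏ x ∈ s, f x) * ∏ x ∈ t, f x := by
  have hs := prod_sdiff (f := f) (inter_subset_left : s ∩ t ⊆ s)
  have ht := prod_sdiff (f := f) (inter_subset_right : s ∩ t ⊆ t)
  have hst : (∏ x ∈ s ∩ t, f x) * ∏ x ∈ s ∩ t, f x = 1 := by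
    rw [← prod_mul_distrib]; exact prod_eq_one fun x _ => hf x
  rw [sdiff_inter_self_left] at hs
  rw [sdiff_inter_self_right] at ht
  rw [symmDiff_def, sup_eq_union, prod_union disjoint_sdiff_sdiff, ← hs, ← ht,
    mul_mul_mul_comm, hst, mul_one]

end Finset

open scoped Classical in
noncomputable def edgeSign {n : ℕ} (S : Fin n → Bool) (e : Sym2 (Fin n)) : ℂ :=
  if ∀ v ∈ e, S v = true then -1 else 1

theorem neg_one_pow_edgeCount {n : ℕ} (E : Finset (Sym2 (Fin n))) (S : Fin n → Bool) :
    (-1 : ℂ) ^ edgeCount E S = ∏ e ∈ E, edgeSign S e := by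
  unfold edgeCount edgeSign
  simp only [prod_ite, prod_const, one_pow, mul_one]

theorem edgeSign_mul_self {n : ℕ} (S : Fin n → Bool) (e : Sym2 (Fin n)) :
    edgeSign S e * edgeSign S e = 1 := by
  unfold edgeSign; split_ifs <;> norm_num

theorem edgeSign_mk {n : ℕ} (S : Fin n → Bool) (u v : Fin n) :
    edgeSign S s(u, v) = if S u && S v then -1 else 1 := by
  simp [edgeSign, Sym2.mem_iff, Bool.and_eq_true]

theorem edgeSign_congr {n : ℕ} {S T : Fin n → Bool} {e : Sym2 (Fin n)}
    (h : ∀ v ∈ e, S v = T v) : edgeSign S e = edgeSign T e := by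
  unfold edgeSign
  exact if_congr (forall₂_congr fun v hv => by rw [h v hv]) rfl rfl

theorem prod_eq_prod_filter_notMem_mul_prod_nbhd {n : ℕ} {M : Type*} [CommMonoid M]
    (E : Finset (Sym2 (Fin n))) (b : Fin n) (f : Sym2 (Fin n) → M) :
    ∏ e ∈ E, f e = (∏ e ∈ E with b ∉ e, f e) * ∏ u ∈ nbhd E b, f s(u, b) := by
  have hstar : E.filter (b ∈ ·) = (nbhd E b).image (s(·, b)) := by
    ext e
    simp only [mem_filter, mem_image, nbhd, mem_univ, true_and]
    constructor
    · rintro ⟨he, hb⟩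
      refine ⟨Sym2.Mem.other hb, ?_, ?_⟩ <;> rw [Sym2.eq_swap, Sym2.other_spec]
      exact he
    · rintro ⟨u, hu, rfl⟩
      exact ⟨hu, Sym2.mem_mk_right u b⟩
  rw [← prod_filter_not_mul_prod_filter E (b ∈ ·), hstar,
    prod_image fun x _ y _ h => Sym2.congr_left.mp h]

theorem edgeSign_update_xor_mk {n : ℕ} (S : Fin n → Bool) (a b u : Fin n) :
    edgeSign (Function.update S b (xor (S b) (S a))) s(u, b) =
      edgeSign S s(u, b) * if u = b then edgeSign S s(a, a) else edgeSign S s(a, u) := by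
  by_cases hu : u = b
  · subst hu
    simp only [edgeSign_mk, Function.update_self, if_true]
    cases S u <;> cases S a <;> norm_num
  · simp only [edgeSign_mk, Function.update_self, Function.update_of_ne hu, if_neg hu]
    cases S u <;> cases S a <;> cases S b <;> norm_num

theorem prod_edgeSign_update_xor {n : ℕ} (E : Finset (Sym2 (Fin n))) (S : Fin n → Bool)
    (a b : Fin n) :
    ∏ e ∈ E, edgeSign (Function.update S b (xor (S b) (S a))) e =
      (∏ e ∈ E, edgeSign S e) * ((∏ v ∈ (nbhd E b).erase b, edgeSign S s(a, v)) *
        if s(b, b) ∈ E then edgeSign S s(a, a) else 1) := by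
  have hloop : b ∈ nbhd E b ↔ s(b, b) ∈ E := by simp [nbhd]
  have hfar : ∏ e ∈ E with b ∉ e, edgeSign (Function.update S b (xor (S b) (S a))) e =
      ∏ e ∈ E with b ∉ e, edgeSign S e := by
    refine prod_congr rfl fun e he => edgeSign_congr fun v hv => ?_
    exact Function.update_of_ne (fun h : v = b => (mem_filter.mp he).2 (h ▸ hv)) _ _
  rw [prod_eq_prod_filter_notMem_mul_prod_nbhd E b, hfar,
    prod_congr rfl fun u _ => edgeSign_update_xor_mk S a b u, prod_mul_distrib, prod_ite,
    filter_eq', filter_ne', prod_eq_prod_filter_notMem_mul_prod_nbhd E b (edgeSign S)]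
  simp only [← hloop]
  split_ifs <;> simp only [prod_singleton, prod_empty] <;> ring

theorem stmt10_general {n : ℕ} (E : Finset (Sym2 (Fin n))) (a b : Fin n) :
    CNOTgate a b (graphState E) =
      graphState
        (symmDiff (symmDiff E (((nbhd E b).erase b).image fun v => s(a, v)))
          (if s(b, b) ∈ E then {s(a, a)} else ∅)) := by
  funext S
  have hloop : ∏ e ∈ (if s(b, b) ∈ E then {s(a, a)} else ∅), edgeSign S e =
      if s(b, b) ∈ E then edgeSign S s(a, a) else 1 := by
    split_ifs <;> simp only [prod_singleton, prod_empty]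
  simp only [CNOTgate, graphState, neg_one_pow_edgeCount, prod_edgeSign_update_xor,
    prod_symmDiff_of_mul_self_eq_one _ _ (edgeSign_mul_self S), hloop, mul_assoc,
    prod_image fun x _ y _ h => Sym2.congr_right.mp h]

/-- `CNOT_{a,b}` complements the edges between `a` and `N(b) \ {b}`, and
loop-complements `a` when `b` has a self-loop. -/
theorem stmt10 {n : ℕ} (E : Finset (Sym2 (Fin n))) (a b : Fin n) (hab : a ≠ b) :
    CNOTgate a b (graphState E) =
      graphState
        (symmDiff (symmDiff E (((nbhd E b).erase b).image fun v => s(a, v)))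
          (if s(b, b) ∈ E then {s(a, a)} else ∅)) :=
  stmt10_general E a b
end

section
/- Vertex comparison for non-adjacent vertices: let E be an edge set on Fin n and a ≠ b vertices with s(a,b) ∉ E. Then: (i) if N(a) \ {a} = N(b) \ {b} and (s(a,a) ∈ E ↔ s(b,b) ∈ E), then X_a X_b |G_E⟩ = |G_E⟩; (ii) if N(a) \ {a} = N(b) \ {b} but exactly one of a, b has a self-loop, then X_a X_b |G_E⟩ = −|G_E⟩; (iii) if there exists a vertex u ∉ {a, b} with u ∈ N(a) Δ N(b) (symmetric difference), then ⟨G_E, X_a X_b |G_E⟩⟩ = 0. -/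
open Finset

/-!
Flipping bit `a` changes the parity `e_E(S)` by the loop at `a` plus the number of
neighbours `w ≠ a` with `S w = true`, so `X_a |G_E⟩ = ± Z_{N(a) \ {a}} |G_E⟩`.
As `a ∉ N(b)`, the flip of `a` does not disturb the `Z`-signs of `X_b`, hence
`X_a X_b |G_E⟩ = ± Z_{N(a) \ {a}} Z_{N(b) \ {b}} |G_E⟩` with sign `-1` per loop at `a` or `b`.
Equal neighbourhoods make the two `Z`-strings cancel; otherwise the amplitude overlap is a
sum of a character `S ↦ ±1` that changes sign under flipping a bit `u` of the
symmetric difference, and such a sum vanishes.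
-/

namespace GraphState

section Signs

variable {α : Type*}

open scoped Classical in
noncomputable def edgeSign (e : Sym2 α) (S : α → Bool) : ℂ :=
  if ∀ v ∈ e, S v = true then -1 else 1

/-- The eigenvalue of `Z_A = ∏_{w ∈ A} Z_w` at the bit string `S`. -/
def zSign (A : Finset α) (S : α → Bool) : ℂ :=
  ∏ w ∈ A, if S w then -1 else 1

theorem edgeSign_mk (u v : α) (S : α → Bool) :
    edgeSign s(u, v) S = if S u && S v then -1 else 1 := by
  simp [edgeSign, Sym2.mem_iff]

theorem edgeSign_update_of_notMem [DecidableEq α] {e : Sym2 α} {a : α} (ha : a ∉ e) (x : Bool)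
    (S : α → Bool) : edgeSign e (Function.update S a x) = edgeSign e S := by
  unfold edgeSign
  congr 1
  refine propext (forall₂_congr fun v hv => ?_)
  rw [Function.update_of_ne (ne_of_mem_of_not_mem hv ha)]

theorem edgeSign_loop_flip [DecidableEq α] (a : α) (S : α → Bool) :
    edgeSign s(a, a) (Function.update S a (!S a)) = -edgeSign s(a, a) S := by
  rw [edgeSign_mk, edgeSign_mk]
  cases S a <;> simp

theorem edgeSign_flip_of_ne [DecidableEq α] {w a : α} (hw : w ≠ a) (S : α → Bool) :
    edgeSign s(w, a) (Function.update S a (!S a)) =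
      (if S w then -1 else 1) * edgeSign s(w, a) S := by
  rw [edgeSign_mk, edgeSign_mk, Function.update_self, Function.update_of_ne hw]
  cases S w <;> cases S a <;> simp

theorem zSign_update_of_notMem [DecidableEq α] {A : Finset α} {u : α} (hu : u ∉ A) (x : Bool)
    (S : α → Bool) : zSign A (Function.update S u x) = zSign A S :=
  Finset.prod_congr rfl fun w hw => by rw [Function.update_of_ne (ne_of_mem_of_not_mem hw hu)]

theorem zSign_flip_of_mem [DecidableEq α] {A : Finset α} {u : α} (hu : u ∈ A) (S : α → Bool) :
    zSign A (Function.update S u (!S u)) = -zSign A S := by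
  unfold zSign
  rw [← Finset.mul_prod_erase A _ hu, ← Finset.mul_prod_erase A _ hu,
    Function.update_self, Finset.prod_congr rfl fun w hw => by
      rw [Function.update_of_ne (Finset.ne_of_mem_erase hw)]]
  cases S u <;> simp

theorem zSign_mul_self (A : Finset α) (S : α → Bool) : zSign A S * zSign A S = 1 := by
  rw [zSign, ← Finset.prod_mul_distrib]
  exact Finset.prod_eq_one fun w _ => by split_ifs <;> norm_num

theorem prod_edgeSign_flip [DecidableEq α] (N : Finset α) (a : α) (S : α → Bool) :
    ∏ w ∈ N, edgeSign s(w, a) (Function.update S a (!S a)) =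
      (if a ∈ N then -1 else 1) * zSign (N.erase a) S * ∏ w ∈ N, edgeSign s(w, a) S := by
  have hrest : ∏ w ∈ N.erase a, edgeSign s(w, a) (Function.update S a (!S a)) =
      zSign (N.erase a) S * ∏ w ∈ N.erase a, edgeSign s(w, a) S := by
    rw [zSign, ← Finset.prod_mul_distrib]
    exact Finset.prod_congr rfl fun w hw => edgeSign_flip_of_ne (Finset.ne_of_mem_erase hw) S
  by_cases ha : a ∈ N
  · rw [← Finset.mul_prod_erase N _ ha, ← Finset.mul_prod_erase N _ ha, hrest,
      edgeSign_loop_flip, if_pos ha]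
    ring
  · rw [Finset.erase_eq_of_notMem ha] at hrest ⊢
    rw [hrest, if_neg ha, one_mul]

theorem sum_eq_zero_of_flip_neg [DecidableEq α] [Fintype α] {f : (α → Bool) → ℂ} (u : α)
    (hf : ∀ S, f (Function.update S u (!S u)) = -f S) : ∑ S, f S = 0 := by
  have hflip : Function.Involutive fun S : α → Bool => Function.update S u (!S u) := by
    intro S
    ext w
    rcases eq_or_ne w u with rfl | hw <;> simp [Function.update_of_ne, *]
  have h := Equiv.sum_comp (hflip.toPerm _) f
  simp only [Function.Involutive.coe_toPerm, hf, Finset.sum_neg_distrib] at h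
  exact CharZero.neg_eq_self_iff.mp h

theorem sum_zSign_mul_zSign_eq_zero [DecidableEq α] [Fintype α] {A B : Finset α} {u : α}
    (hu : u ∈ symmDiff A B) : ∑ S, zSign A S * zSign B S = 0 := by
  refine sum_eq_zero_of_flip_neg u fun S => ?_
  rcases Finset.mem_symmDiff.mp hu with ⟨hA, hB⟩ | ⟨hB, hA⟩
  · rw [zSign_flip_of_mem hA, zSign_update_of_notMem hB, neg_mul]
  · rw [zSign_flip_of_mem hB, zSign_update_of_notMem hA, mul_neg]

end Signs

section Fin

variable {n : ℕ}

theorem neg_one_pow_edgeCount (E : Finset (Sym2 (Fin n))) (S : Fin n → Bool) :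
    (-1 : ℂ) ^ edgeCount E S = ∏ e ∈ E, edgeSign e S := by
  unfold edgeCount edgeSign
  -- `edgeCount` filters with the `Fin n` decidability instance, `edgeSign` with the classical one
  rw [@Finset.prod_ite _ _ _ _ _ fun _ => Classical.propDecidable _, Finset.prod_const,
    Finset.prod_const, one_pow, mul_one]
  congr

theorem filter_mem_eq_image_nbhd (E : Finset (Sym2 (Fin n))) (a : Fin n) :
    E.filter (a ∈ ·) = (nbhd E a).image (s(·, a)) := by
  ext e
  simp only [Finset.mem_filter, Finset.mem_image, nbhd, Finset.mem_univ, true_and]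
  constructor
  · rintro ⟨he, ha⟩
    obtain ⟨w, rfl⟩ := Sym2.mem_iff_exists.mp ha
    exact ⟨w, by rwa [Sym2.eq_swap], Sym2.eq_swap⟩
  · rintro ⟨w, hw, rfl⟩
    exact ⟨hw, Sym2.mem_mk_right w a⟩

theorem prod_edgeSign_eq (E : Finset (Sym2 (Fin n))) (a : Fin n) (S : Fin n → Bool) :
    ∏ e ∈ E, edgeSign e S =
      (∏ e ∈ E with a ∉ e, edgeSign e S) * ∏ w ∈ nbhd E a, edgeSign s(w, a) S := by
  rw [← Finset.prod_filter_not_mul_prod_filter E (a ∈ ·), filter_mem_eq_image_nbhd,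
    Finset.prod_image fun _ _ _ _ h => Sym2.congr_left.mp h]

theorem graphState_flip (E : Finset (Sym2 (Fin n))) (a : Fin n) (S : Fin n → Bool) :
    graphState E (Function.update S a (!S a)) =
      (if s(a, a) ∈ E then -1 else 1) * zSign ((nbhd E a).erase a) S * graphState E S := by
  have hloop : a ∈ nbhd E a ↔ s(a, a) ∈ E := by simp [nbhd]
  unfold graphState
  rw [neg_one_pow_edgeCount, neg_one_pow_edgeCount, prod_edgeSign_eq E a, prod_edgeSign_eq E a,
    prod_edgeSign_flip, Finset.prod_congr rfl fun e he =>
      edgeSign_update_of_notMem (Finset.mem_filter.mp he).2 _ S]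
  simp only [hloop]
  ring

theorem Xgate_Xgate_graphState {E : Finset (Sym2 (Fin n))} {a b : Fin n} (hnadj : s(a, b) ∉ E) :
    Xgate a (Xgate b (graphState E)) = fun S =>
      (if s(a, a) ∈ E then -1 else 1) * (if s(b, b) ∈ E then -1 else 1) *
        (zSign ((nbhd E a).erase a) S * zSign ((nbhd E b).erase b) S) * graphState E S := by
  have ha : a ∉ (nbhd E b).erase b := by simp [nbhd, hnadj]
  funext S
  unfold Xgate
  rw [graphState_flip, graphState_flip, zSign_update_of_notMem ha]
  ring

theorem qInner_graphState_mul (E : Finset (Sym2 (Fin n))) (f : QState n) :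
    qInner (graphState E) (fun S => f S * graphState E S) =
      (((Real.sqrt 2)⁻¹ ^ n : ℝ) : ℂ) ^ 2 * ∑ S, f S := by
  rw [qInner, Finset.mul_sum]
  refine Finset.sum_congr rfl fun S _ => ?_
  have hsign : ((-1 : ℂ) ^ edgeCount E S) ^ 2 = 1 := by
    rw [pow_right_comm, neg_one_sq, one_pow]
  simp only [graphState, map_mul, map_pow, map_neg, map_one, Complex.conj_ofReal]
  linear_combination (((Real.sqrt 2)⁻¹ ^ n : ℝ) : ℂ) ^ 2 * f S * hsign

end Fin

end GraphState

open GraphState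

theorem stmt16_general {n : ℕ} (E : Finset (Sym2 (Fin n))) (a b : Fin n)
    (hnadj : s(a, b) ∉ E) :
    (((nbhd E a).erase a = (nbhd E b).erase b ∧ (s(a, a) ∈ E ↔ s(b, b) ∈ E)) →
      Xgate a (Xgate b (graphState E)) = graphState E) ∧
    (((nbhd E a).erase a = (nbhd E b).erase b ∧ Xor' (s(a, a) ∈ E) (s(b, b) ∈ E)) →
      Xgate a (Xgate b (graphState E)) = fun S => -graphState E S) ∧
    ((∃ u : Fin n, u ≠ a ∧ u ≠ b ∧ Xor' (u ∈ nbhd E a) (u ∈ nbhd E b)) →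
      qInner (graphState E) (Xgate a (Xgate b (graphState E))) = 0) := by
  rw [Xgate_Xgate_graphState hnadj]
  refine ⟨fun ⟨hN, hloop⟩ => ?_, fun ⟨hN, hloop⟩ => ?_, fun ⟨u, hua, hub, hu⟩ => ?_⟩
  · funext S
    rw [hN, zSign_mul_self]
    by_cases hb : s(b, b) ∈ E <;> simp [hloop, hb]
  · funext S
    rw [hN, zSign_mul_self]
    rcases hloop with ⟨ha, hb⟩ | ⟨hb, ha⟩ <;> simp [ha, hb]
  · have hu' : u ∈ symmDiff ((nbhd E a).erase a) ((nbhd E b).erase b) := by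
      simp only [Finset.mem_symmDiff, Finset.mem_erase, hua, hub, ne_eq, not_false_eq_true,
        true_and]
      exact hu
    rw [qInner_graphState_mul, ← Finset.mul_sum, sum_zSign_mul_zSign_eq_zero hu', mul_zero,
      mul_zero]

/-- Vertex comparison for non-adjacent vertices `a ≠ b` via the observable `X_a X_b`. -/
theorem stmt16 {n : ℕ} (E : Finset (Sym2 (Fin n))) (a b : Fin n) (hab : a ≠ b)
    (hnadj : s(a, b) ∉ E) :
    (((nbhd E a).erase a = (nbhd E b).erase b ∧ (s(a, a) ∈ E ↔ s(b, b) ∈ E)) →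
      Xgate a (Xgate b (graphState E)) = graphState E) ∧
    (((nbhd E a).erase a = (nbhd E b).erase b ∧ Xor' (s(a, a) ∈ E) (s(b, b) ∈ E)) →
      Xgate a (Xgate b (graphState E)) = fun S => -graphState E S) ∧
    ((∃ u : Fin n, u ≠ a ∧ u ≠ b ∧ Xor' (u ∈ nbhd E a) (u ∈ nbhd E b)) →
      qInner (graphState E) (Xgate a (Xgate b (graphState E))) = 0) :=
  stmt16_general E a b hnadj
end
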